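/- For the three-degrees-of-freedom Hénon–Heiles type system, the iterated action of the adjoint of the Nijenhuis tensor N = P1 P0⁻¹ on the gradient of H1 satisfies the triangular recursion relations: N(x)ᵀ ∇H1(x) = −2 q1 ∇H1(x) + ∇H2(x) and (N(x)ᵀ)² ∇H1(x) = (3 q1² − 2 q2) ∇H1(x) − 2 q1 ∇H2(x) + ∇H3(x) for every x ∈ ℝ⁶. -/

import Mathlib

/- STATEMENT 4: triangular recursion relations for the adjoint of the Nijenhuis
tensor N = P1 P0⁻¹ of the 3-dof Hénon–Heiles type system:
  Nᵀ ∇H1 = −2q1 ∇H1 + ∇H2,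
  (Nᵀ)² ∇H1 = (3q1² − 2q2) ∇H1 − 2q1 ∇H2 + ∇H3. -/

noncomputable section

open Matrix

def pd (i : Fin 6) (f : (Fin 6 → ℝ) → ℝ) (x : Fin 6 → ℝ) : ℝ :=
  fderiv ℝ f x (Pi.single i 1)

def grad (f : (Fin 6 → ℝ) → ℝ) (x : Fin 6 → ℝ) : Fin 6 → ℝ :=
  fun i => pd i f x

/-- the canonical matrix `P0 = [[0, I],[−I, 0]]`. -/
def P0 : Matrix (Fin 6) (Fin 6) ℝ :=
  !![0, 0, 0, 1, 0, 0;
     0, 0, 0, 0, 1, 0;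
     0, 0, 0, 0, 0, 1;
     -1, 0, 0, 0, 0, 0;
     0, -1, 0, 0, 0, 0;
     0, 0, -1, 0, 0, 0]

/-- The matrix `P1 = [[0, A],[−Aᵀ, B]]` with
`A = −[[q1,−1,0],[2q2,q1,q3],[q3,0,0]]`, `B = [[0,−p2,−p3],[p2,0,0],[p3,0,0]]`. -/
def P1 (x : Fin 6 → ℝ) : Matrix (Fin 6) (Fin 6) ℝ :=
  !![0, 0, 0, -(x 0), 1, 0;
     0, 0, 0, -(2 * x 1), -(x 0), -(x 2);
     0, 0, 0, -(x 2), 0, 0;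
     x 0, 2 * x 1, x 2, 0, -(x 4), -(x 5);
     -1, x 0, 0, x 4, 0, 0;
     0, x 2, 0, x 5, 0, 0]

/-- the Nijenhuis tensor `N = P1 P0⁻¹`. -/
def N (x : Fin 6 → ℝ) : Matrix (Fin 6) (Fin 6) ℝ := P1 x * P0⁻¹

def H1 (x : Fin 6 → ℝ) : ℝ :=
  (1/2) * (2 * x 3 * x 4 + (x 5)^2) - (5/8) * (x 0)^4 + (5/2) * (x 0)^2 * x 1
    + (1/2) * x 0 * (x 2)^2 - (1/2) * (x 1)^2

def H2 (x : Fin 6 → ℝ) : ℝ :=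
  (1/2) * (x 3)^2 + x 3 * x 4 * x 0 + (x 5)^2 * x 0 - (x 4)^2 * x 1
    - x 4 * x 5 * x 2 - (1/2) * (x 0)^5 - (1/4) * (x 0)^2 * (x 2)^2
    + (1/2) * x 1 * (x 2)^2 + 2 * x 0 * (x 1)^2

def H3 (x : Fin 6 → ℝ) : ℝ :=
  (1/2) * (x 5)^2 * (x 0)^2 + (x 5)^2 * x 1 - x 3 * x 5 * x 2
    - x 4 * x 5 * x 0 * x 2 + (1/2) * (x 4)^2 * (x 2)^2
    + (1/2) * (x 0)^3 * (x 2)^2 - x 0 * x 1 * (x 2)^2 - (1/8) * (x 2)^4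

/-! ### Auxiliary lemmas -/

theorem HasFDerivAt.npow {E} [NormedAddCommGroup E] [NormedSpace ℝ E]
    {f : E → ℝ} {f' : E →L[ℝ] ℝ} {x : E} (h : HasFDerivAt f f' x) (n : ℕ) :
    HasFDerivAt (fun y => f y ^ n) (((n : ℝ) * f x ^ (n - 1)) • f') x := by
  induction n with
  | zero => simpa using hasFDerivAt_const (1 : ℝ) x
  | succ n ih =>
    have h2 := ih.mul h
    have he : (fun y => f y ^ n * f y) = fun y => f y ^ (n + 1) := by
      funext y; rw [← pow_succ]
    rw [show ((fun y => f y ^ n) * f) = fun y => f y ^ (n + 1) from he] at h2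
    refine h2.congr_fderiv (Eq.symm ?_)
    rw [smul_smul, ← add_smul]
    congr 1
    rcases n with _ | m
    · simp
    · push_cast
      simp [pow_succ]
      ring

lemma vec6_0 {α : Type*} (a b c d e f : α) : ![a,b,c,d,e,f] 0 = a := rfl
lemma vec6_1 {α : Type*} (a b c d e f : α) : ![a,b,c,d,e,f] 1 = b := rfl
lemma vec6_2 {α : Type*} (a b c d e f : α) : ![a,b,c,d,e,f] 2 = c := rfl
lemma vec6_3 {α : Type*} (a b c d e f : α) : ![a,b,c,d,e,f] 3 = d := rfl
lemma vec6_4 {α : Type*} (a b c d e f : α) : ![a,b,c,d,e,f] 4 = e := rfl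
lemma vec6_5 {α : Type*} (a b c d e f : α) : ![a,b,c,d,e,f] 5 = f := rfl

lemma vec6_mk0 {α : Type*} (a b c d e f : α) (h : (0:ℕ) < 6) : ![a,b,c,d,e,f] ⟨0,h⟩ = a := rfl
lemma vec6_mk1 {α : Type*} (a b c d e f : α) (h : (1:ℕ) < 6) : ![a,b,c,d,e,f] ⟨1,h⟩ = b := rfl
lemma vec6_mk2 {α : Type*} (a b c d e f : α) (h : (2:ℕ) < 6) : ![a,b,c,d,e,f] ⟨2,h⟩ = c := rfl
lemma vec6_mk3 {α : Type*} (a b c d e f : α) (h : (3:ℕ) < 6) : ![a,b,c,d,e,f] ⟨3,h⟩ = d := rfl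
lemma vec6_mk4 {α : Type*} (a b c d e f : α) (h : (4:ℕ) < 6) : ![a,b,c,d,e,f] ⟨4,h⟩ = e := rfl
lemma vec6_mk5 {α : Type*} (a b c d e f : α) (h : (5:ℕ) < 6) : ![a,b,c,d,e,f] ⟨5,h⟩ = f := rfl

lemma grad_eq {f : (Fin 6 → ℝ) → ℝ} {L : (Fin 6 → ℝ) →L[ℝ] ℝ} {x : Fin 6 → ℝ}
    (h : HasFDerivAt f L x) : grad f x = fun i => L (Pi.single i 1) := by
  funext i; simp only [grad, pd, h.fderiv]

lemma hp (i : Fin 6) (x : Fin 6 → ℝ) :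
    HasFDerivAt (fun y : Fin 6 → ℝ => y i)
      (ContinuousLinearMap.proj (R := ℝ) (φ := fun _ : Fin 6 => ℝ) i) x :=
  hasFDerivAt_apply i x

lemma grad_H1 (x : Fin 6 → ℝ) : grad H1 x =
    ![-(5/2) * (x 0)^3 + 5 * x 0 * x 1 + (1/2) * (x 2)^2,
      (5/2) * (x 0)^2 - x 1, x 0 * x 2, x 4, x 3, x 5] := by
  have hH : HasFDerivAt H1 _ x :=
    ((((((((hp 3 x).const_mul 2).mul (hp 4 x)).add ((hp 5 x).npow 2)).const_mul (1/2)).sub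
      (((hp 0 x).npow 4).const_mul (5/8))).add ((((hp 0 x).npow 2).const_mul (5/2)).mul (hp 1 x))).add
      (((hp 0 x).const_mul (1/2)).mul ((hp 2 x).npow 2))).sub (((hp 1 x).npow 2).const_mul (1/2))
  rw [grad_eq hH]
  funext i
  fin_cases i <;>
    simp [ContinuousLinearMap.proj_apply, Pi.single_apply,
      vec6_0, vec6_1, vec6_2, vec6_3, vec6_4, vec6_5] <;> norm_num <;> ring

lemma grad_H2 (x : Fin 6 → ℝ) : grad H2 x =
    ![x 3 * x 4 + (x 5)^2 - (5/2) * (x 0)^4 - (1/2) * x 0 * (x 2)^2 + 2 * (x 1)^2,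
      -(x 4)^2 + (1/2) * (x 2)^2 + 4 * x 0 * x 1,
      -(x 4 * x 5) - (1/2) * (x 0)^2 * x 2 + x 1 * x 2,
      x 3 + x 4 * x 0,
      x 3 * x 0 - 2 * x 4 * x 1 - x 5 * x 2,
      2 * x 5 * x 0 - x 4 * x 2] := by
  have hH : HasFDerivAt H2 _ x :=
    (((((((((hp 3 x).npow 2).const_mul (1/2)).add
      (((hp 3 x).mul (hp 4 x)).mul (hp 0 x))).add
      (((hp 5 x).npow 2).mul (hp 0 x))).sub
      (((hp 4 x).npow 2).mul (hp 1 x))).sub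
      ((((hp 4 x).mul (hp 5 x)).mul (hp 2 x)))).sub
      (((hp 0 x).npow 5).const_mul (1/2))).sub
      ((((hp 0 x).npow 2).const_mul (1/4)).mul ((hp 2 x).npow 2))).add
      (((hp 1 x).const_mul (1/2)).mul ((hp 2 x).npow 2)) |>.add
      (((hp 0 x).const_mul 2).mul ((hp 1 x).npow 2))
  rw [grad_eq hH]
  funext i
  fin_cases i <;>
    simp [ContinuousLinearMap.proj_apply, Pi.single_apply,
      vec6_0, vec6_1, vec6_2, vec6_3, vec6_4, vec6_5] <;> norm_num <;> ring

lemma grad_H3 (x : Fin 6 → ℝ) : grad H3 x =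
    ![(x 5)^2 * x 0 - x 4 * x 5 * x 2 + (3/2) * (x 0)^2 * (x 2)^2 - x 1 * (x 2)^2,
      (x 5)^2 - x 0 * (x 2)^2,
      -(x 3 * x 5) - x 4 * x 5 * x 0 + (x 4)^2 * x 2 + (x 0)^3 * x 2
        - 2 * x 0 * x 1 * x 2 - (1/2) * (x 2)^3,
      -(x 5 * x 2),
      -(x 5 * x 0 * x 2) + x 4 * (x 2)^2,
      x 5 * (x 0)^2 + 2 * x 5 * x 1 - x 3 * x 2 - x 4 * x 0 * x 2] := by
  have hH : HasFDerivAt H3 _ x :=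
    ((((((((((hp 5 x).npow 2).const_mul (1/2)).mul ((hp 0 x).npow 2)).add
      (((hp 5 x).npow 2).mul (hp 1 x))).sub
      ((((hp 3 x).mul (hp 5 x)).mul (hp 2 x)))).sub
      (((((hp 4 x).mul (hp 5 x)).mul (hp 0 x)).mul (hp 2 x)))).add
      ((((hp 4 x).npow 2).const_mul (1/2)).mul ((hp 2 x).npow 2))).add
      ((((hp 0 x).npow 3).const_mul (1/2)).mul ((hp 2 x).npow 2))).sub
      (((hp 0 x).mul (hp 1 x)).mul ((hp 2 x).npow 2))).sub
      (((hp 2 x).npow 4).const_mul (1/8))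
  rw [grad_eq hH]
  funext i
  fin_cases i <;>
    simp [ContinuousLinearMap.proj_apply, Pi.single_apply,
      vec6_0, vec6_1, vec6_2, vec6_3, vec6_4, vec6_5] <;> norm_num <;> ring

lemma P0_inv : P0⁻¹ = -P0 := by
  apply Matrix.inv_eq_right_inv
  ext i j
  fin_cases i <;> fin_cases j <;>
    simp only [Matrix.mul_apply, Fin.sum_univ_six, Matrix.neg_apply, P0, Matrix.of_apply,
      vec6_0, vec6_1, vec6_2, vec6_3, vec6_4, vec6_5, vec6_mk0, vec6_mk1, vec6_mk2, vec6_mk3, vec6_mk4, vec6_mk5, Matrix.one_apply] <;>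
    norm_num [Fin.ext_iff]

lemma N_eq (x : Fin 6 → ℝ) : N x =
    !![-(x 0), 1, 0, 0, 0, 0;
       -(2 * x 1), -(x 0), -(x 2), 0, 0, 0;
       -(x 2), 0, 0, 0, 0, 0;
       0, -(x 4), -(x 5), -(x 0), -(2 * x 1), -(x 2);
       x 4, 0, 0, 1, -(x 0), 0;
       x 5, 0, 0, 0, -(x 2), 0] := by
  rw [N, P0_inv]
  ext i j
  fin_cases i <;> fin_cases j <;>
    simp only [Matrix.mul_apply, Fin.sum_univ_six, Matrix.neg_apply, P0, P1, Matrix.of_apply,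
      vec6_0, vec6_1, vec6_2, vec6_3, vec6_4, vec6_5, vec6_mk0, vec6_mk1, vec6_mk2, vec6_mk3, vec6_mk4, vec6_mk5] <;>
    norm_num

theorem henon_heiles_3dof_recursion_relations :
    ∀ x : Fin 6 → ℝ,
      (N x)ᵀ.mulVec (grad H1 x) = (-2 * x 0) • grad H1 x + grad H2 x ∧
      ((N x)ᵀ ^ 2).mulVec (grad H1 x) =
        (3 * (x 0)^2 - 2 * x 1) • grad H1 x + (-2 * x 0) • grad H2 x + grad H3 x := by
  intro x
  have hstep : (N x)ᵀ.mulVec (grad H1 x) = (-2 * x 0) • grad H1 x + grad H2 x := by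
    rw [N_eq, grad_H1, grad_H2]
    funext i
    fin_cases i <;>
      simp only [Matrix.mulVec, dotProduct, Fin.sum_univ_six, Matrix.transpose_apply,
        Matrix.of_apply, vec6_0, vec6_1, vec6_2, vec6_3, vec6_4, vec6_5, vec6_mk0, vec6_mk1, vec6_mk2, vec6_mk3, vec6_mk4, vec6_mk5, Pi.add_apply, Pi.smul_apply, smul_eq_mul] <;> ring
  refine ⟨hstep, ?_⟩
  rw [pow_two, ← Matrix.mulVec_mulVec, hstep, Matrix.mulVec_add, Matrix.mulVec_smul, hstep]
  rw [N_eq, grad_H1, grad_H2, grad_H3]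
  funext i
  fin_cases i <;>
    simp only [Matrix.mulVec, dotProduct, Fin.sum_univ_six, Matrix.transpose_apply,
      Matrix.of_apply, vec6_0, vec6_1, vec6_2, vec6_3, vec6_4, vec6_5, vec6_mk0, vec6_mk1, vec6_mk2, vec6_mk3, vec6_mk4, vec6_mk5, Pi.add_apply, Pi.smul_apply, smul_eq_mul] <;> ring

end
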